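/- arXiv:2505.03014 — 2 statements merged into one kernel-verified Lean document; each statement's English description precedes it below -/
import Mathlib

section
/- For every ε > 0 there exists a positive integer ℓ such that for every rooted graph F and all finite strings a, b of natural numbers, λ₁(F, a0^ℓ) < λ₁(F, a0^ℓ b) + ε. -/
/-- A rooted graph: a finite simple graph with a distinguished root vertex. -/
structure RootedGraph where
  V : Type
  [fintypeV : Fintype V]
  G : SimpleGraph V
  root : V

attribute [instance] RootedGraph.fintypeV

/-- One-step extension of a rooted graph: attach a new path vertex (the new root)
to the old root, together with a clique of `k` new vertices each adjacent to
both the old root and the new path vertex. -/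
def RootedGraph.extend (F : RootedGraph) (k : ℕ) : RootedGraph where
  V := F.V ⊕ Option (Fin k)
  G :=
    { Adj := fun a b =>
        match a, b with
        | Sum.inl u, Sum.inl w => F.G.Adj u w
        | Sum.inl u, Sum.inr _ => u = F.root
        | Sum.inr _, Sum.inl w => w = F.root
        | Sum.inr x, Sum.inr y => x ≠ y
      symm := by
        constructor
        rintro (u | x) (w | y) h
        · exact F.G.adj_symm h
        · exact h
        · exact h
        · exact h.symm
      loopless := by
        constructor
        rintro (u | x) h
        · exact F.G.irrefl h
        · exact h rfl }
  root := Sum.inr none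

/-- The rowing graph `(F, a)`. -/
def RootedGraph.rowing (F : RootedGraph) (a : List ℕ) : RootedGraph :=
  a.foldl RootedGraph.extend F

open scoped Classical in
/-- Adjacency matrix of (the graph of) a rooted graph. -/
noncomputable def RootedGraph.adjMat (F : RootedGraph) : Matrix F.V F.V ℝ :=
  Matrix.of fun u v => if F.G.Adj u v then 1 else 0

/-- The smallest adjacency eigenvalue of a rooted graph. -/
noncomputable def RootedGraph.lam1 (F : RootedGraph) : ℝ :=
  sInf {t : ℝ | ∃ x : F.V → ℝ, x ≠ 0 ∧ F.adjMat.mulVec x = t • x}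

/-!
Write `⟨y, A y⟩` for the adjacency quadratic form. A rowing step adds vertices `K` (the clique and
the new root) that form a clique together with the old root `r`, so it adds
`(y r + ∑_K y)² - y r² - ∑_K y²` to the form: along the tail of a rowing graph every added vertex
is charged at most twice its squared weight. Cutting `(F, a0^ℓb)` at the root `v_j` of
`(F, a0^j)`, `j ≤ ℓ`, therefore gives `⟨y, A y⟩ ≥ κ ‖y‖² - y(v_j)²` whenever
`κ ≤ min(λ₁(F, a0^j), -2)`. Rowing only lowers `λ₁`, and the alternating `±1` test vector along
the path gives `λ₁(F, a0^ℓ) ≤ -2 + 2/(ℓ+1)`, so `κ = λ₁(F, a0^ℓ) - 2/(ℓ+1)` is admissible for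
every `j`. Averaging the `ℓ + 1` cuts for a `λ₁`-eigenvector `y` of `(F, a0^ℓb)`, whose squared
weights at the distinct `v_j` sum to at most `‖y‖²`, yields
`λ₁(F, a0^ℓb) ≥ λ₁(F, a0^ℓ) - 3/(ℓ+1)`.
-/

open Matrix

theorem Fintype.sum_sum_ite_ne_mul {α β : Type*} [CommRing α] [Fintype β] [DecidableEq β]
    (g : β → α) :
    ∑ t, ∑ s, (if t ≠ s then g t * g s else 0) = (∑ t, g t) ^ 2 - ∑ t, g t ^ 2 := by
  simp only [sq, Finset.sum_mul_sum, ← Finset.sum_sub_distrib]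
  congr! 1 with t -
  rw [Finset.sum_ite, Finset.sum_const_zero, add_zero, Finset.filter_ne,
    Finset.sum_erase_eq_sub (Finset.mem_univ t)]

namespace Matrix.IsHermitian

variable {n : Type*} [Fintype n] [DecidableEq n] {A : Matrix n n ℝ}

theorem eigenvalues_mul_dotProduct_self_le (hA : A.IsHermitian) {i : n}
    (hi : ∀ j, hA.eigenvalues i ≤ hA.eigenvalues j) (z : n → ℝ) :
    hA.eigenvalues i * (z ⬝ᵥ z) ≤ z ⬝ᵥ (A *ᵥ z) := by
  set B := hA.eigenvectorBasis
  have hB : ∀ j, ⇑(B j) ⬝ᵥ (A *ᵥ z) = hA.eigenvalues j * (⇑(B j) ⬝ᵥ z) := fun j => by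
    rw [dotProduct_mulVec, ← mulVec_transpose, ← conjTranspose_eq_transpose_of_trivial, hA.eq,
      hA.mulVec_eigenvectorBasis, smul_dotProduct, smul_eq_mul]
  have parseval : ∀ y, z ⬝ᵥ y = ∑ j, (⇑(B j) ⬝ᵥ z) * (⇑(B j) ⬝ᵥ y) := fun y => by
    have := B.sum_inner_mul_inner (WithLp.toLp 2 z) (WithLp.toLp 2 y)
    simp only [EuclideanSpace.inner_eq_star_dotProduct, star_trivial] at this
    simpa [dotProduct_comm] using this.symm
  rw [parseval, parseval, Finset.mul_sum]
  refine Finset.sum_le_sum fun j _ => ?_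
  rw [hB]
  nlinarith [hi j, mul_self_nonneg (⇑(B j) ⬝ᵥ z)]

theorem exists_isLeast_eigenvalue [Nonempty n] (hA : A.IsHermitian) :
    ∃ m, IsLeast {t | ∃ x, x ≠ 0 ∧ A *ᵥ x = t • x} m ∧
      ∀ z, m * (z ⬝ᵥ z) ≤ z ⬝ᵥ (A *ᵥ z) := by
  obtain ⟨i, hi⟩ := Finite.exists_min hA.eigenvalues
  have rayleigh := hA.eigenvalues_mul_dotProduct_self_le hi
  refine ⟨hA.eigenvalues i, ⟨⟨_, ?_, hA.mulVec_eigenvectorBasis i⟩, ?_⟩, rayleigh⟩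
  · exact fun h => hA.eigenvectorBasis.orthonormal.ne_zero i (WithLp.ofLp_injective 2 h)
  · rintro t ⟨x, hx, hAx⟩
    have hpos : 0 < x ⬝ᵥ x := by simpa using dotProduct_star_self_pos_iff.mpr hx
    have := rayleigh x
    rw [hAx, dotProduct_smul, smul_eq_mul] at this
    exact le_of_mul_le_mul_right this hpos

end Matrix.IsHermitian

namespace RootedGraph

open scoped Classical

noncomputable def adjForm (R : RootedGraph) (x : R.V → ℝ) : ℝ := x ⬝ᵥ (R.adjMat *ᵥ x)

theorem adjForm_eq_sum (R : RootedGraph) (x : R.V → ℝ) :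
    R.adjForm x = ∑ u, ∑ v, if R.G.Adj u v then x u * x v else 0 := by
  simp only [adjForm, dotProduct, mulVec, adjMat, of_apply, Finset.mul_sum]
  congr! 2 with u - v -
  split_ifs <;> ring

theorem adjMat_isHermitian (R : RootedGraph) : R.adjMat.IsHermitian := by
  ext u v
  simp only [conjTranspose_apply, adjMat, of_apply, star_trivial]
  rw [SimpleGraph.adj_comm]

theorem lam1_spec (R : RootedGraph) :
    IsLeast {t | ∃ x, x ≠ 0 ∧ R.adjMat *ᵥ x = t • x} R.lam1 ∧
      ∀ z, R.lam1 * (z ⬝ᵥ z) ≤ R.adjForm z := by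
  have : Nonempty R.V := ⟨R.root⟩
  obtain ⟨m, hm, rayleigh⟩ := R.adjMat_isHermitian.exists_isLeast_eigenvalue
  rw [lam1, hm.csInf_eq]
  exact ⟨hm, rayleigh⟩

section extend

variable (R : RootedGraph) (k : ℕ)

@[simp] theorem extend_adj_inl_inl (u v : R.V) :
    (R.extend k).G.Adj (Sum.inl u) (Sum.inl v) ↔ R.G.Adj u v := Iff.rfl

@[simp] theorem extend_adj_inl_inr (u : R.V) (t : Option (Fin k)) :
    (R.extend k).G.Adj (Sum.inl u) (Sum.inr t) ↔ u = R.root := Iff.rfl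

@[simp] theorem extend_adj_inr_inl (t : Option (Fin k)) (u : R.V) :
    (R.extend k).G.Adj (Sum.inr t) (Sum.inl u) ↔ u = R.root := Iff.rfl

@[simp] theorem extend_adj_inr_inr (t s : Option (Fin k)) :
    (R.extend k).G.Adj (Sum.inr t) (Sum.inr s) ↔ t ≠ s := Iff.rfl

theorem adjForm_extend (w : (R.extend k).V → ℝ) :
    (R.extend k).adjForm w = R.adjForm (w ∘ Sum.inl)
      + (w (Sum.inl R.root) + ∑ t, w (Sum.inr t)) ^ 2 - w (Sum.inl R.root) ^ 2
      - ∑ t, w (Sum.inr t) ^ 2 := by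
  have hclique := Fintype.sum_sum_ite_ne_mul fun t : Option (Fin k) => w (Sum.inr t)
  have h : (R.extend k).adjForm w = ∑ a : R.V ⊕ Option (Fin k), ∑ b : R.V ⊕ Option (Fin k),
      if (R.extend k).G.Adj a b then w a * w b else 0 := adjForm_eq_sum _ w
  rw [h, adjForm_eq_sum]
  dsimp only [Function.comp]
  simp only [Fintype.sum_sum_type, extend_adj_inl_inl, extend_adj_inl_inr, extend_adj_inr_inl,
    extend_adj_inr_inr, Finset.sum_ite_irrel, Finset.sum_const_zero, Finset.sum_add_distrib,
    Finset.sum_ite_eq', Finset.mem_univ, if_true, ← Finset.mul_sum, ← Finset.sum_mul]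
  linear_combination hclique

theorem dotProduct_self_extend (w : (R.extend k).V → ℝ) :
    w ⬝ᵥ w = (w ∘ Sum.inl) ⬝ᵥ (w ∘ Sum.inl) + ∑ t, w (Sum.inr t) ^ 2 := by
  change ∑ v : R.V ⊕ Option (Fin k), w v * w v = _
  simp only [Fintype.sum_sum_type, dotProduct, sq]
  rfl

end extend

theorem lam1_mul_le_adjForm (R : RootedGraph) (z : R.V → ℝ) :
    R.lam1 * (z ⬝ᵥ z) ≤ R.adjForm z :=
  R.lam1_spec.2 z

theorem exists_adjForm_eq_lam1_mul (R : RootedGraph) :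
    ∃ x : R.V → ℝ, 0 < x ⬝ᵥ x ∧ R.adjForm x = R.lam1 * (x ⬝ᵥ x) := by
  obtain ⟨x, hx, hAx⟩ := R.lam1_spec.1.1
  refine ⟨x, by simpa using dotProduct_star_self_pos_iff.mpr hx, ?_⟩
  rw [adjForm, hAx, dotProduct_smul, smul_eq_mul]

theorem lam1_le_of_adjForm_le (R : RootedGraph) {x : R.V → ℝ} {t : ℝ} (hx : 0 < x ⬝ᵥ x)
    (h : R.adjForm x ≤ t * (x ⬝ᵥ x)) : R.lam1 ≤ t :=
  le_of_mul_le_mul_right ((R.lam1_mul_le_adjForm x).trans h) hx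

theorem lam1_extend_le (R : RootedGraph) (k : ℕ) : (R.extend k).lam1 ≤ R.lam1 := by
  obtain ⟨x, hx, hQx⟩ := R.exists_adjForm_eq_lam1_mul
  let w : (R.extend k).V → ℝ := Sum.elim x 0
  have hinl : w ∘ Sum.inl = x := rfl
  have hnorm : w ⬝ᵥ w = x ⬝ᵥ x := by
    rw [dotProduct_self_extend, hinl]
    simp [w]
  have hQ : (R.extend k).adjForm w = R.adjForm x := by
    rw [adjForm_extend, hinl]
    simp [w]
  refine (R.extend k).lam1_le_of_adjForm_le (hnorm ▸ hx) ?_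
  rw [hQ, hnorm, hQx]

theorem lam1_rowing_le (R : RootedGraph) (c : List ℕ) : (R.rowing c).lam1 ≤ R.lam1 := by
  induction c generalizing R with
  | nil => rfl
  | cons k c ih => exact (ih (R.extend k)).trans (R.lam1_extend_le k)

def toRowing : (R : RootedGraph) → (c : List ℕ) → R.V → (R.rowing c).V
  | _, [] => id
  | R, k :: c => (R.extend k).toRowing c ∘ Sum.inl

theorem rowing_append (R : RootedGraph) (c d : List ℕ) :
    R.rowing (c ++ d) = (R.rowing c).rowing d :=
  List.foldl_append

theorem dotProduct_self_comp_toRowing_le (R : RootedGraph) (c : List ℕ)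
    (y : (R.rowing c).V → ℝ) : (y ∘ R.toRowing c) ⬝ᵥ (y ∘ R.toRowing c) ≤ y ⬝ᵥ y := by
  induction c generalizing R with
  | nil => rfl
  | cons k c ih =>
    let w := y ∘ (R.extend k).toRowing c
    have hw : (w ∘ Sum.inl) ⬝ᵥ (w ∘ Sum.inl) ≤ w ⬝ᵥ w := by
      rw [dotProduct_self_extend]
      exact le_add_of_nonneg_right (Finset.sum_nonneg fun t _ => sq_nonneg _)
    exact hw.trans (ih (R.extend k) y)

theorem adjForm_comp_toRowing_le (R : RootedGraph) (c : List ℕ) (y : (R.rowing c).V → ℝ) :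
    R.adjForm (y ∘ R.toRowing c) + y (R.rowing c).root ^ 2 ≤
      (R.rowing c).adjForm y + 2 * (y ⬝ᵥ y - (y ∘ R.toRowing c) ⬝ᵥ (y ∘ R.toRowing c))
        + y (R.toRowing c R.root) ^ 2 := by
  induction c generalizing R with
  | nil =>
    show R.adjForm y + y R.root ^ 2 ≤ R.adjForm y + 2 * (y ⬝ᵥ y - y ⬝ᵥ y) + y R.root ^ 2
    simp
  | cons k c ih =>
    let w := y ∘ (R.extend k).toRowing c
    show R.adjForm (w ∘ Sum.inl) + y ((R.extend k).rowing c).root ^ 2 ≤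
      ((R.extend k).rowing c).adjForm y + 2 * (y ⬝ᵥ y - (w ∘ Sum.inl) ⬝ᵥ (w ∘ Sum.inl))
        + w (Sum.inl R.root) ^ 2
    have ih' : (R.extend k).adjForm w + y ((R.extend k).rowing c).root ^ 2 ≤
        ((R.extend k).rowing c).adjForm y + 2 * (y ⬝ᵥ y - w ⬝ᵥ w) + w (Sum.inr none) ^ 2 :=
      ih (R.extend k) y
    have hroot : w (Sum.inr none) ^ 2 ≤ ∑ t, w (Sum.inr t) ^ 2 :=
      Finset.single_le_sum (f := fun t => w (Sum.inr t) ^ 2) (fun t _ => sq_nonneg _)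
        (Finset.mem_univ none)
    have := adjForm_extend R k w
    have := dotProduct_self_extend R k w
    linarith [sq_nonneg (w (Sum.inl R.root) + ∑ t, w (Sum.inr t))]

theorem le_adjForm_rowing_of_le_lam1 (R : RootedGraph) (c : List ℕ) (y : (R.rowing c).V → ℝ)
    {κ : ℝ} (hκR : κ ≤ R.lam1) (hκ : κ ≤ -2) :
    κ * (y ⬝ᵥ y) - y (R.toRowing c R.root) ^ 2 ≤ (R.rowing c).adjForm y := by
  set u := y ∘ R.toRowing c
  have hglue := R.adjForm_comp_toRowing_le c y
  have hu := R.dotProduct_self_comp_toRowing_le c y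
  have hu₀ : 0 ≤ u ⬝ᵥ u := by simpa using dotProduct_star_self_nonneg u
  have hR : κ * (u ⬝ᵥ u) ≤ R.adjForm u :=
    (mul_le_mul_of_nonneg_right hκR hu₀).trans (R.lam1_mul_le_adjForm u)
  have hrest : κ * (y ⬝ᵥ y - u ⬝ᵥ u) ≤ -2 * (y ⬝ᵥ y - u ⬝ᵥ u) :=
    mul_le_mul_of_nonneg_right hκ (sub_nonneg.mpr hu)
  linarith [sq_nonneg (y (R.rowing c).root)]

/-- The extra term on the left, the mass of `y` on the copy of `R`, is what lets the induction
spend the squared weight at each of the `m + 1` path vertices only once. -/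
theorem succ_mul_sub_adjForm_rowing_replicate_zero_append_le (m : ℕ) (R : RootedGraph)
    (b : List ℕ) (y : (R.rowing (List.replicate m 0 ++ b)).V → ℝ) {κ : ℝ}
    (hκR : κ ≤ (R.rowing (List.replicate m 0)).lam1) (hκ : κ ≤ -2) :
    (m + 1) * (κ * (y ⬝ᵥ y) - (R.rowing (List.replicate m 0 ++ b)).adjForm y)
      + (y ∘ R.toRowing (List.replicate m 0 ++ b)) ⬝ᵥ (y ∘ R.toRowing (List.replicate m 0 ++ b))
      ≤ y ⬝ᵥ y + y (R.toRowing (List.replicate m 0 ++ b) R.root) ^ 2 := by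
  induction m generalizing R with
  | zero =>
    change ((0 : ℕ) + 1 : ℝ) * (κ * (y ⬝ᵥ y) - (R.rowing b).adjForm y)
      + (y ∘ R.toRowing b) ⬝ᵥ (y ∘ R.toRowing b) ≤ y ⬝ᵥ y + y (R.toRowing b R.root) ^ 2
    have := R.le_adjForm_rowing_of_le_lam1 b y hκR hκ
    have := R.dotProduct_self_comp_toRowing_le b y
    push_cast
    linarith
  | succ m ih =>
    let T := (R.extend 0).rowing (List.replicate m 0 ++ b)
    let w := y ∘ (R.extend 0).toRowing (List.replicate m 0 ++ b)
    change ((m + 1 : ℕ) + 1 : ℝ) * (κ * (y ⬝ᵥ y) - T.adjForm y)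
      + (w ∘ Sum.inl) ⬝ᵥ (w ∘ Sum.inl) ≤ y ⬝ᵥ y + w (Sum.inl R.root) ^ 2
    have hcut : κ * (y ⬝ᵥ y) - w (Sum.inl R.root) ^ 2 ≤ T.adjForm y :=
      R.le_adjForm_rowing_of_le_lam1 _ y (hκR.trans (R.lam1_rowing_le _)) hκ
    have ih' : (m + 1) * (κ * (y ⬝ᵥ y) - T.adjForm y) + w ⬝ᵥ w ≤ y ⬝ᵥ y + w (Sum.inr none) ^ 2 :=
      ih (R.extend 0) y hκR
    have hw : w ⬝ᵥ w = (w ∘ Sum.inl) ⬝ᵥ (w ∘ Sum.inl) + w (Sum.inr none) ^ 2 := by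
      rw [dotProduct_self_extend, Fintype.sum_unique]
      rfl
    push_cast
    linarith

theorem succ_mul_sub_lam1_rowing_replicate_zero_append_le_one (m : ℕ) (R : RootedGraph) (b : List ℕ) {κ : ℝ}
    (hκR : κ ≤ (R.rowing (List.replicate m 0)).lam1) (hκ : κ ≤ -2) :
    (m + 1) * (κ - (R.rowing (List.replicate m 0 ++ b)).lam1) ≤ 1 := by
  obtain ⟨y, hy, hQy⟩ := (R.rowing (List.replicate m 0 ++ b)).exists_adjForm_eq_lam1_mul
  have key := R.succ_mul_sub_adjForm_rowing_replicate_zero_append_le m b y hκR hκ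
  set u := y ∘ R.toRowing (List.replicate m 0 ++ b)
  have hroot : y (R.toRowing _ R.root) ^ 2 ≤ u ⬝ᵥ u := by
    rw [sq]
    exact Finset.single_le_sum (f := fun v => u v * u v) (fun v _ => mul_self_nonneg (u v))
      (Finset.mem_univ R.root)
  rw [hQy, ← sub_mul, ← mul_assoc] at key
  exact le_of_mul_le_mul_right (by linarith) hy

theorem lam1_rowing_replicate_zero_mul_le (m : ℕ) (R : RootedGraph) (x : R.V → ℝ) :
    (R.rowing (List.replicate m 0)).lam1 * (x ⬝ᵥ x + m * x R.root ^ 2) ≤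
      R.adjForm x - 2 * m * x R.root ^ 2 := by
  induction m generalizing R x with
  | zero => simpa [rowing] using R.lam1_mul_le_adjForm x
  | succ m ih =>
    change ((R.extend 0).rowing (List.replicate m 0)).lam1 * _ ≤ _
    let w : (R.extend 0).V → ℝ := Sum.elim x fun _ => -x R.root
    have hinl : w ∘ Sum.inl = x := rfl
    have hQ : (R.extend 0).adjForm w = R.adjForm x - 2 * x R.root ^ 2 := by
      rw [adjForm_extend, hinl]
      simp only [w, Sum.elim_inl, Sum.elim_inr, Fintype.sum_unique]
      ring
    have hnorm : w ⬝ᵥ w = x ⬝ᵥ x + x R.root ^ 2 := by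
      rw [dotProduct_self_extend, hinl]
      simp [w]
    have hroot : w (R.extend 0).root ^ 2 = x R.root ^ 2 := by
      simp [w, extend]
    have := ih (R.extend 0) w
    rw [hQ, hnorm, hroot] at this
    push_cast
    linarith

theorem lam1_rowing_replicate_zero_add_two_le (m : ℕ) (R : RootedGraph) :
    (R.rowing (List.replicate m 0)).lam1 + 2 ≤ 2 / (m + 1) := by
  have h := lam1_rowing_replicate_zero_mul_le m R (Pi.single R.root 1)
  have hQ : R.adjForm (Pi.single R.root 1) = 0 := by
    simp [adjForm, adjMat]
  simp only [single_dotProduct, Pi.single_eq_same, hQ] at h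
  rw [le_div_iff₀' (by positivity)]
  linarith

end RootedGraph

/-- For every `ε > 0` there exists a positive integer `ℓ` such that for every rooted
graph `F` and all finite strings `a, b` of natural numbers,
`λ₁(F, a0^ℓ) < λ₁(F, a0^ℓb) + ε`. -/
theorem lam1_rowing_zeros_lt (ε : ℝ) (hε : 0 < ε) :
    ∃ ℓ : ℕ, 0 < ℓ ∧ ∀ (F : RootedGraph) (a b : List ℕ),
      (F.rowing (a ++ List.replicate ℓ 0)).lam1 <
        (F.rowing (a ++ List.replicate ℓ 0 ++ b)).lam1 + ε := by
  refine ⟨⌈3 / ε⌉₊, Nat.ceil_pos.mpr (by positivity), fun F a b => ?_⟩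
  set ℓ := ⌈3 / ε⌉₊
  rw [List.append_assoc, RootedGraph.rowing_append, RootedGraph.rowing_append]
  set R := F.rowing a
  set L := (R.rowing (List.replicate ℓ 0)).lam1
  set μ := (R.rowing (List.replicate ℓ 0 ++ b)).lam1
  have hℓ : (0 : ℝ) < ℓ + 1 := by positivity
  have hL := R.lam1_rowing_replicate_zero_add_two_le ℓ
  have hgap : (ℓ + 1) * (L - 2 / (ℓ + 1) - μ) ≤ 1 :=
    R.succ_mul_sub_lam1_rowing_replicate_zero_append_le_one ℓ b (by linarith [div_nonneg zero_le_two hℓ.le])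
      (by linarith)
  have hℓε : 3 / (ℓ + 1) < ε := by
    have := (div_le_iff₀ hε).mp (Nat.le_ceil (3 / ε))
    rw [div_lt_iff₀ hℓ]
    linarith
  calc L = (L - 2 / (ℓ + 1) - μ) + 2 / (ℓ + 1) + μ := by ring
    _ ≤ 1 / (ℓ + 1) + 2 / (ℓ + 1) + μ := by gcongr; rwa [le_div_iff₀' hℓ]
    _ = 3 / (ℓ + 1) + μ := by ring
    _ < μ + ε := by linarith
end

section
/- For each i ∈ {1,2,3}, the limit λ₁(F_i, 0^∞) := lim_{n→∞} λ₁(F_i, 0ⁿ) is strictly less than -2. -/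
/-- `F₁`: the path on 4 vertices `u₁u₂u₃u₄` rooted at `u₃`. -/
def F1 : RootedGraph := { V := Fin 4, G := SimpleGraph.pathGraph 4, root := 2 }

/-- `F₂`: the fan consisting of a path `p₁p₂p₃p₄` (vertices `0,1,2,3`) together with an
apex `r` (vertex `4`) adjacent to `p₁, p₂, p₃, p₄`, rooted at the apex `r`. -/
def F2 : RootedGraph :=
  { V := Fin 5,
    G := SimpleGraph.fromRel fun i j => (i.val + 1 = j.val ∧ j.val ≤ 3) ∨ i.val = 4,
    root := 4 }

/-- `F₃`: the path on 6 vertices `w₁w₂w₃w₄w₅w₆` rooted at `w₅`. -/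
def F3 : RootedGraph := { V := Fin 6, G := SimpleGraph.pathGraph 6, root := 4 }

/-!
`λ₁` is bounded above by the Rayleigh quotient of every nonzero vector. In `(F, 0ⁿ)` all
cliques are empty, so it is `F` with a pendant path `v₀v₁…vₙ` at the root. A vector `x` on `F`
extended by `c₁, …, c_m` on `v₁, …, v_m` and by zero further out has quadratic form
`xᵀAx + 2 (x(v₀) c₁ + c₁c₂ + ⋯ + c_{m-1}c_m)` and squared norm `xᵀx + Σ cᵢ²` for every `n ≥ m`,
so its Rayleigh quotient bounds `λ₁(F, 0ⁿ)` for all large `n`, hence also the limit.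
For each `Fᵢ` an explicit integer vector, alternating in sign and decaying geometrically along
the path like an eigenvector of `(Fᵢ, 0^∞)`, has Rayleigh quotient below `-2`.
-/

open Matrix Module.End WithLp Filter Topology

theorem Matrix.IsHermitian.sInf_eigenvalues_le_rayleigh {n : Type*} [Fintype n] [DecidableEq n]
    {A : Matrix n n ℝ} (hA : A.IsHermitian) {x : n → ℝ} (hx : x ≠ 0) :
    sInf {t : ℝ | ∃ y : n → ℝ, y ≠ 0 ∧ A *ᵥ y = t • y} ≤ x ⬝ᵥ A *ᵥ x / (x ⬝ᵥ x) := by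
  set T := toEuclideanCLM (𝕜 := ℝ) A
  have hT : (T : EuclideanSpace ℝ n →ₗ[ℝ] EuclideanSpace ℝ n).IsSymmetric :=
    isSymmetric_toEuclideanLin_iff.mpr hA
  have hx' : toLp 2 x ≠ 0 := by simpa using hx
  have : Nontrivial (EuclideanSpace ℝ n) := ⟨⟨_, _, hx'⟩⟩
  have hS : {t : ℝ | ∃ y : n → ℝ, y ≠ 0 ∧ A *ᵥ y = t • y} ⊆
      {t | HasEigenvalue (T : EuclideanSpace ℝ n →ₗ[ℝ] EuclideanSpace ℝ n) t} := by
    rintro t ⟨y, hy, hAy⟩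
    exact hasEigenvalue_of_hasEigenvector (x := toLp 2 y)
      ⟨mem_eigenspace_iff.mpr (congrArg (toLp 2) hAy), by simpa using hy⟩
  obtain ⟨v, hv⟩ := hT.hasEigenvalue_iInf_of_finiteDimensional.exists_hasEigenvector
  have hmin : sInf {t : ℝ | ∃ y : n → ℝ, y ≠ 0 ∧ A *ᵥ y = t • y} ≤ _ :=
    csInf_le ((finite_hasEigenvalue _).subset hS).bddBelow
      ⟨ofLp v, by simpa using hv.2, congrArg ofLp hv.apply_eq_smul⟩
  have hbdd : BddBelow (Set.range fun y : {y : EuclideanSpace ℝ n // y ≠ 0} =>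
      T.rayleighQuotient y) :=
    ⟨-‖T‖, by rintro _ ⟨y, rfl⟩; exact neg_le_of_abs_le (T.rayleighQuotient_le_norm y)⟩
  have hx_rayleigh : T.rayleighQuotient (toLp 2 x) = x ⬝ᵥ A *ᵥ x / (x ⬝ᵥ x) := by
    rw [ContinuousLinearMap.rayleighQuotient, ContinuousLinearMap.reApplyInnerSelf_apply,
      RCLike.re_to_real, real_inner_comm, inner_toEuclideanCLM, ← real_inner_self_eq_norm_sq,
      EuclideanSpace.inner_eq_star_dotProduct]
    simp
  exact hmin.trans (hx_rayleigh ▸ ciInf_le hbdd ⟨toLp 2 x, hx'⟩)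

def pathEdgeSum : ℝ → List ℝ → ℝ
  | _, [] => 0
  | r, c :: cs => r * c + pathEdgeSum c cs

theorem pathEdgeSum_append_replicate_zero (r : ℝ) (cs : List ℝ) (m : ℕ) :
    pathEdgeSum r (cs ++ List.replicate m 0) = pathEdgeSum r cs := by
  induction cs generalizing r with
  | nil =>
    induction m generalizing r with
    | zero => rfl
    | succ m ih => simpa [List.replicate_succ, pathEdgeSum] using ih 0
  | cons c cs ih => simp [pathEdgeSum, ih]

namespace RootedGraph

variable (F : RootedGraph)

theorem adjMat_isHermitian_s12 : F.adjMat.IsHermitian := by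
  classical
  ext u v
  exact if_congr (F.G.adj_comm v u) rfl rfl

theorem lam1_le_rayleigh {x : F.V → ℝ} (hx : x ≠ 0) :
    F.lam1 ≤ x ⬝ᵥ F.adjMat *ᵥ x / (x ⬝ᵥ x) := by
  classical
  exact F.adjMat_isHermitian_s12.sInf_eigenvalues_le_rayleigh hx

theorem sum_extend {M : Type*} [AddCommMonoid M] {k : ℕ} (f : (F.extend k).V → M) :
    ∑ v, f v = ∑ u, f (Sum.inl u) + ∑ b, f (Sum.inr b) :=
  Fintype.sum_sum_type f

section adjMat_extend

variable {k : ℕ}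

theorem adjMat_extend_inl_inl (u v : F.V) :
    (F.extend k).adjMat (Sum.inl u) (Sum.inl v) = F.adjMat u v := rfl

open scoped Classical in
theorem adjMat_extend_inl_inr (u : F.V) (b : Option (Fin k)) :
    (F.extend k).adjMat (Sum.inl u) (Sum.inr b) = if u = F.root then 1 else 0 := rfl

open scoped Classical in
theorem adjMat_extend_inr_inl (b : Option (Fin k)) (v : F.V) :
    (F.extend k).adjMat (Sum.inr b) (Sum.inl v) = if v = F.root then 1 else 0 := rfl

theorem adjMat_extend_zero_inr_inr (a b : Option (Fin 0)) :
    (F.extend 0).adjMat (Sum.inr a) (Sum.inr b) = 0 :=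
  if_neg (not_not.mpr (Subsingleton.elim a b))

end adjMat_extend

def extendVec (x : F.V → ℝ) (c : ℝ) : (F.extend 0).V → ℝ := Sum.elim x fun _ => c

theorem extendVec_quadForm (x : F.V → ℝ) (c : ℝ) :
    F.extendVec x c ⬝ᵥ (F.extend 0).adjMat *ᵥ F.extendVec x c =
      x ⬝ᵥ F.adjMat *ᵥ x + 2 * x F.root * c := by
  classical
  simp only [dotProduct, mulVec, sum_extend, adjMat_extend_inl_inl, adjMat_extend_inl_inr,
    adjMat_extend_inr_inl, adjMat_extend_zero_inr_inr, extendVec]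
  simp only [Sum.elim_inl, Sum.elim_inr, Finset.univ_unique, Finset.sum_singleton, ite_mul,
    one_mul, zero_mul, mul_zero, add_zero, mul_add, mul_ite, Finset.sum_add_distrib,
    Finset.sum_ite_eq', Finset.mem_univ, if_true]
  ring

theorem extendVec_dotProduct_self (x : F.V → ℝ) (c : ℝ) :
    F.extendVec x c ⬝ᵥ F.extendVec x c = x ⬝ᵥ x + c * c := by
  simp [dotProduct, sum_extend, extendVec]

/-- The vector on `(F, 0ⁿ)`, `n = cs.length`, equal to `x` on `F` and to `cᵢ` at the path
vertex `vᵢ`. -/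
def pathVec : (F : RootedGraph) → (F.V → ℝ) → (cs : List ℝ) →
    (F.rowing (List.replicate cs.length 0)).V → ℝ
  | _, x, [] => x
  | F, x, c :: cs => pathVec (F.extend 0) (F.extendVec x c) cs

theorem pathVec_quadForm (x : F.V → ℝ) (cs : List ℝ) :
    F.pathVec x cs ⬝ᵥ (F.rowing (List.replicate cs.length 0)).adjMat *ᵥ F.pathVec x cs =
      x ⬝ᵥ F.adjMat *ᵥ x + 2 * pathEdgeSum (x F.root) cs := by
  induction cs generalizing F x with
  | nil => simp only [pathEdgeSum, mul_zero, add_zero]; rfl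
  | cons c cs ih =>
    calc _ = F.extendVec x c ⬝ᵥ (F.extend 0).adjMat *ᵥ F.extendVec x c + 2 * pathEdgeSum c cs :=
          ih (F.extend 0) (F.extendVec x c)
      _ = _ := by rw [extendVec_quadForm, pathEdgeSum]; ring

theorem pathVec_dotProduct_self (x : F.V → ℝ) (cs : List ℝ) :
    F.pathVec x cs ⬝ᵥ F.pathVec x cs = x ⬝ᵥ x + (cs.map (· ^ 2)).sum := by
  induction cs generalizing F x with
  | nil => exact (add_zero _).symm
  | cons c cs ih =>
    calc _ = F.extendVec x c ⬝ᵥ F.extendVec x c + (cs.map (· ^ 2)).sum := ih (F.extend 0) _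
      _ = _ := by rw [extendVec_dotProduct_self, List.map_cons, List.sum_cons]; ring

theorem pathVec_ne_zero {x : F.V → ℝ} (hx : x ≠ 0) (cs : List ℝ) : F.pathVec x cs ≠ 0 := by
  induction cs generalizing F x with
  | nil => exact hx
  | cons c cs ih => exact ih (F.extend 0) fun h => hx (funext fun u => congrFun h (Sum.inl u))

theorem lam1_rowing_replicate_le {x : F.V → ℝ} (hx : x ≠ 0) (cs : List ℝ) {n : ℕ}
    (hn : cs.length ≤ n) :
    (F.rowing (List.replicate n 0)).lam1 ≤
      (x ⬝ᵥ F.adjMat *ᵥ x + 2 * pathEdgeSum (x F.root) cs) / (x ⬝ᵥ x + (cs.map (· ^ 2)).sum) := by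
  obtain ⟨m, rfl⟩ := Nat.exists_eq_add_of_le hn
  have hlen : (cs ++ List.replicate m 0).length = cs.length + m := by simp
  have := lam1_le_rayleigh _ (F.pathVec_ne_zero hx (cs ++ List.replicate m 0))
  rw [pathVec_quadForm, pathVec_dotProduct_self, pathEdgeSum_append_replicate_zero] at this
  simpa [hlen] using this

theorem lt_of_tendsto_lam1_rowing {L c : ℝ}
    (hL : Tendsto (fun n : ℕ => (F.rowing (List.replicate n 0)).lam1) atTop (𝓝 L))
    {x : F.V → ℝ} (hx : x ≠ 0) (cs : List ℝ)
    (h : x ⬝ᵥ F.adjMat *ᵥ x + 2 * pathEdgeSum (x F.root) cs <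
      c * (x ⬝ᵥ x + (cs.map (· ^ 2)).sum)) :
    L < c := by
  have hpos : 0 < x ⬝ᵥ x + (cs.map (· ^ 2)).sum :=
    add_pos_of_pos_of_nonneg (by simpa using dotProduct_star_self_pos_iff.mpr hx)
      (List.sum_nonneg (by simp [sq_nonneg]))
  refine (le_of_tendsto hL ?_).trans_lt ((div_lt_iff₀ hpos).mpr h)
  filter_upwards [eventually_ge_atTop cs.length] with n hn
  exact F.lam1_rowing_replicate_le hx cs hn

end RootedGraph

/-- For each `i ∈ {1,2,3}`, the limit `λ₁(F_i, 0^∞) = lim_{n→∞} λ₁(F_i, 0ⁿ)` is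
strictly less than `-2`. -/
theorem lam1_rowing_limit_lt_neg_two (L1 L2 L3 : ℝ)
    (hL1 : Filter.Tendsto (fun n : ℕ => (F1.rowing (List.replicate n 0)).lam1)
      Filter.atTop (nhds L1))
    (hL2 : Filter.Tendsto (fun n : ℕ => (F2.rowing (List.replicate n 0)).lam1)
      Filter.atTop (nhds L2))
    (hL3 : Filter.Tendsto (fun n : ℕ => (F3.rowing (List.replicate n 0)).lam1)
      Filter.atTop (nhds L3)) :
    L1 < -2 ∧ L2 < -2 ∧ L3 < -2 := by
  refine ⟨F1.lt_of_tendsto_lam1_rowing hL1 (x := ![33, -66, 100, -50]) ?_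
      [-86, 74, -63, 53, -44, 36, -28, 20, -13, 7] ?_,
    F2.lt_of_tendsto_lam1_rowing hL2 (x := ![-40, -20, -20, -40, 100]) ?_
      [-83, 69, -56, 45, -35, 25, -16, 8] ?_,
    F3.lt_of_tendsto_lam1_rowing hL3 (x := ![-17, 35, -54, 75, -100, 49]) ?_
      [80, -64, 50, -39, 29, -21, 13, -7] ?_⟩
  · exact fun h => by simpa [F1] using congrFun h F1.root
  · unfold F1
    simp [dotProduct, mulVec, RootedGraph.adjMat, Fin.sum_univ_four, SimpleGraph.pathGraph_adj,
      pathEdgeSum]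
    norm_num
  · exact fun h => by simpa [F2] using congrFun h F2.root
  · unfold F2
    simp [dotProduct, mulVec, RootedGraph.adjMat, Fin.sum_univ_five, pathEdgeSum]
    norm_num
  · exact fun h => by simpa [F3] using congrFun h F3.root
  · unfold F3
    simp [dotProduct, mulVec, RootedGraph.adjMat, Fin.sum_univ_six, SimpleGraph.pathGraph_adj,
      pathEdgeSum]
    norm_num
end
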